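/- Let α_1(v) be the root of k!·v/(k+1)^k = ∏_{r=0}^{k-1}(α - r/(k+1)) with α_1(1) = k/(k+1), analytic in v near 1. Then the derivatives at v = 1 satisfy: d/ds[α_1(e^s)]|_{s=0} = 1/((k+1)H_k) and d²/ds²[α_1(e^s)]|_{s=0} = H_k^{(2)}/((k+1)H_k^3), where H_k = ∑_{ℓ=1}^k 1/ℓ and H_k^{(2)} = ∑_{ℓ=1}^k 1/ℓ². -/

import Mathlib

/-!
Logarithmic differentiation of `∏_r (g s - r/(k+1)) = k! eˢ/(k+1)ᵏ` gives
`g' · S₁ = 1` near `0`, where `S_n = ∑_r (g - r/(k+1))⁻ⁿ`; differentiating once more gives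
`g'' · S₁ = g'² · S₂` at `0`. At `g 0 = k/(k+1)` the factors are `(k - r)/(k+1)`, so
`S₁ = (k+1) H_k` and `S₂ = (k+1)² H_k⁽²⁾`.
-/

open Filter Topology Finset Real

@[to_additive]
theorem Finset.prod_range_sub_eq_prod_Icc {M : Type*} [CommMonoid M] (k : ℕ) (f : ℕ → M) :
    ∏ r ∈ range k, f (k - r) = ∏ ℓ ∈ Icc 1 k, f ℓ := by
  refine prod_nbij' (k - ·) (k - ·) ?_ ?_ ?_ ?_ fun _ _ => rfl
  all_goals
    intro x hx
    simp only [mem_range, mem_Icc] at hx ⊢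
    omega

theorem sum_range_inv_pow_div_sub_div (k n : ℕ) (K : ℝ) :
    ∑ r ∈ range k, (((k : ℝ) / K - r / K) ^ n)⁻¹ = K ^ n * ∑ ℓ ∈ Icc 1 k, 1 / (ℓ : ℝ) ^ n := by
  rw [← sum_range_sub_eq_sum_Icc, mul_sum]
  refine sum_congr rfl fun r hr => ?_
  rw [Nat.cast_sub (mem_range.mp hr).le, ← sub_div, div_pow, inv_div, div_eq_mul_one_div]

section ImplicitDifferentiation

variable {ι : Type*} {s : Finset ι} {c : ι → ℝ} {g : ℝ → ℝ} {x₀ : ℝ}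

theorem eventually_deriv_mul_sum_inv_sub_eq_one {C : ℝ} (hC : C ≠ 0)
    (hg : ∀ᶠ x in 𝓝 x₀, DifferentiableAt ℝ g x)
    (heq : ∀ᶠ x in 𝓝 x₀, ∏ i ∈ s, (g x - c i) = C * exp x) :
    (fun x => deriv g x * ∑ i ∈ s, (g x - c i)⁻¹) =ᶠ[𝓝 x₀] fun _ => 1 := by
  have hprod : (fun x => ∏ i ∈ s, (g x - c i)) =ᶠ[𝓝 x₀] fun x => C * exp x := heq
  filter_upwards [hprod.eventuallyEq_nhds, hg] with x hx hdx
  have hne : ∀ i ∈ s, g x - c i ≠ 0 :=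
    prod_ne_zero_iff.mp <| by simpa only [hx.self_of_nhds] using mul_ne_zero hC (exp_ne_zero x)
  have hlog := (logDeriv_congr_nhds hx).self_of_nhds
  rw [logDeriv_prod hne fun i _ => hdx.sub_const (c i), logDeriv_const_mul x C hC,
    Real.logDeriv_exp] at hlog
  simpa [logDeriv_apply, mul_sum, div_eq_mul_inv] using hlog

theorem deriv_deriv_mul_sum_inv_sub (hg : DifferentiableAt ℝ g x₀)
    (hg' : DifferentiableAt ℝ (deriv g) x₀) (hne : ∀ i ∈ s, g x₀ - c i ≠ 0)
    (h : (fun x => deriv g x * ∑ i ∈ s, (g x - c i)⁻¹) =ᶠ[𝓝 x₀] fun _ => 1) :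
    deriv (deriv g) x₀ * ∑ i ∈ s, (g x₀ - c i)⁻¹
      = deriv g x₀ ^ 2 * ∑ i ∈ s, ((g x₀ - c i) ^ 2)⁻¹ := by
  have hS : HasDerivAt (fun x => ∑ i ∈ s, (g x - c i)⁻¹)
      (-(deriv g x₀ * ∑ i ∈ s, ((g x₀ - c i) ^ 2)⁻¹)) x₀ := by
    have := HasDerivAt.fun_sum fun i hi => (hg.hasDerivAt.sub_const (c i)).inv (hne i hi)
    simpa only [Pi.inv_apply, neg_div, div_eq_mul_inv, neg_mul, sum_neg_distrib, mul_sum]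
      using this
  have h0 := (hg'.hasDerivAt.fun_mul hS).deriv
  rw [h.deriv_eq, deriv_const] at h0
  linear_combination -h0

theorem deriv_mul_sum_inv_sub_eq_one_and_deriv_deriv_mul {C : ℝ} (hC : C ≠ 0)
    (hg : ∀ᶠ x in 𝓝 x₀, DifferentiableAt ℝ g x) (hg' : DifferentiableAt ℝ (deriv g) x₀)
    (heq : ∀ᶠ x in 𝓝 x₀, ∏ i ∈ s, (g x - c i) = C * exp x) :
    deriv g x₀ * ∑ i ∈ s, (g x₀ - c i)⁻¹ = 1 ∧
      deriv (deriv g) x₀ * ∑ i ∈ s, (g x₀ - c i)⁻¹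
        = deriv g x₀ ^ 2 * ∑ i ∈ s, ((g x₀ - c i) ^ 2)⁻¹ := by
  have hlog := eventually_deriv_mul_sum_inv_sub_eq_one hC hg heq
  have hne : ∀ i ∈ s, g x₀ - c i ≠ 0 :=
    prod_ne_zero_iff.mp (heq.self_of_nhds ▸ mul_ne_zero hC (exp_ne_zero x₀))
  exact ⟨hlog.self_of_nhds, deriv_deriv_mul_sum_inv_sub hg.self_of_nhds hg' hne hlog⟩

end ImplicitDifferentiation

theorem ktree_char_root_derivs (k : ℕ) (g : ℝ → ℝ) (hg : ContDiff ℝ 2 g)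
    (heq : ∀ᶠ s in nhds (0 : ℝ),
      ∏ r ∈ Finset.range k, (g s - (r : ℝ) / ((k : ℝ) + 1))
        = (Nat.factorial k : ℝ) * Real.exp s / ((k : ℝ) + 1) ^ k)
    (h0 : g 0 = (k : ℝ) / ((k : ℝ) + 1)) :
    deriv g 0 = 1 / (((k : ℝ) + 1) * (∑ ℓ ∈ Finset.Icc 1 k, (1 : ℝ) / ℓ)) ∧
    deriv (deriv g) 0
      = (∑ ℓ ∈ Finset.Icc 1 k, (1 : ℝ) / (ℓ : ℝ) ^ 2)
        / (((k : ℝ) + 1) * (∑ ℓ ∈ Finset.Icc 1 k, (1 : ℝ) / ℓ) ^ 3) := by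
  set K : ℝ := (k : ℝ) + 1
  set H := ∑ ℓ ∈ Icc 1 k, (1 : ℝ) / ℓ
  set H₂ := ∑ ℓ ∈ Icc 1 k, (1 : ℝ) / (ℓ : ℝ) ^ 2
  have heq' : ∀ᶠ s in 𝓝 0, ∏ r ∈ range k, (g s - r / K) = k.factorial / K ^ k * exp s :=
    heq.mono fun s hs => by rw [hs]; ring
  obtain ⟨h₁, h₂⟩ := deriv_mul_sum_inv_sub_eq_one_and_deriv_deriv_mul (by positivity)
    (Eventually.of_forall fun x => hg.differentiable two_ne_zero x)
    (hg.differentiable_deriv_two 0) heq'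
  have hS₁ : ∑ r ∈ range k, (g 0 - r / K)⁻¹ = K * H := by
    simpa only [h0, pow_one] using sum_range_inv_pow_div_sub_div k 1 K
  have hS₂ : ∑ r ∈ range k, ((g 0 - r / K) ^ 2)⁻¹ = K ^ 2 * H₂ := by
    simpa only [h0] using sum_range_inv_pow_div_sub_div k 2 K
  rw [hS₁] at h₁ h₂
  rw [hS₂] at h₂
  obtain ⟨hK, hH⟩ := mul_ne_zero_iff.mp (right_ne_zero_of_mul_eq_one h₁)
  have hd : deriv g 0 = 1 / (K * H) := eq_one_div_of_mul_eq_one_left h₁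
  refine ⟨hd, ?_⟩
  rw [hd] at h₂
  field_simp at h₂ ⊢
  linear_combination h₂
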